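/- arXiv:2311.14258 — 6 statements merged into one kernel-verified Lean document; each statement's English description precedes it below -/
import Mathlib

section
/- If x is a pendant vertex of a finite simple graph G (i.e., x has exactly one neighbor y), then the nullity of the adjacency matrix of G equals the nullity of the adjacency matrix of G − x − y. -/
open SimpleGraph Matrix Module

-- Multiplicity of `μ` as an adjacency eigenvalue of `G` (0 if not an eigenvalue).
open scoped Classical in
noncomputable def eigMult {V : Type*} [Fintype V] (G : SimpleGraph V) (μ : ℝ) : ℕ :=
  Module.finrank ℝ (Module.End.eigenspace (Matrix.toLin' (G.adjMatrix ℝ)) μ)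

-- The set of adjacency eigenvalues of `G`.
open scoped Classical in
noncomputable def eigSet {V : Type*} [Fintype V] (G : SimpleGraph V) : Set ℝ :=
  {μ : ℝ | Module.End.HasEigenvalue (Matrix.toLin' (G.adjMatrix ℝ)) μ}

/-- Membership in the kernel of `toLin'` of a matrix, entrywise. -/
lemma ker_toLin'_iff {W : Type*} [Fintype W] [DecidableEq W] (M : Matrix W W ℝ) (f : W → ℝ) :
    f ∈ LinearMap.ker (Matrix.toLin' M) ↔ ∀ v, ∑ u, M v u * f u = 0 := by
  rw [LinearMap.mem_ker, Matrix.toLin'_apply]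
  constructor
  · intro hf v
    have := congrFun hf v
    simpa [Matrix.mulVec, dotProduct] using this
  · intro hf
    funext v
    simpa [Matrix.mulVec, dotProduct] using hf v

/-- Splitting a sum over `V` into the values at `x`, `y` and the rest. -/
lemma sum_split_two {V : Type*} [Fintype V] (x y : V) (hne : x ≠ y) {p : V → Prop}
    [DecidablePred p] [Fintype (Subtype p)] (hp : ∀ u, p u ↔ u ≠ x ∧ u ≠ y) (F : V → ℝ) :
    ∑ u, F u = F x + F y + ∑ u : Subtype p, F ↑u := by
  classical
  have h1 : ∑ u : Subtype p, F ↑u = ∑ u ∈ Finset.univ.filter p, F u :=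
    (Finset.sum_subtype _ (by simp) F).symm
  have h2 : Finset.univ.filter (fun u => ¬ p u) = ({x, y} : Finset V) := by
    ext u
    simp only [Finset.mem_filter, Finset.mem_univ, true_and, hp, Finset.mem_insert,
      Finset.mem_singleton]
    tauto
  have h3 := Finset.sum_filter_add_sum_filter_not Finset.univ p F
  rw [h2, Finset.sum_pair hne] at h3
  rw [h1]
  linarith [h3]

open scoped Classical in
theorem nullity_pendant {V : Type*} [Fintype V] (G : SimpleGraph V) (x y : V)
    (h : G.neighborSet x = {y}) :
    eigMult G 0 = eigMult (G.induce {u | u ≠ x ∧ u ≠ y}) 0 := by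
  classical
  have hadjx : ∀ u, G.Adj x u ↔ u = y := by
    intro u
    rw [← SimpleGraph.mem_neighborSet, h, Set.mem_singleton_iff]
  have hxy : G.Adj x y := (hadjx y).2 rfl
  have hne : x ≠ y := G.ne_of_adj hxy
  set S : Set V := {u | u ≠ x ∧ u ≠ y} with hSdef
  have hmemS : ∀ u : V, u ∈ S ↔ u ≠ x ∧ u ≠ y := fun u => Iff.rfl
  set A : Matrix V V ℝ := G.adjMatrix ℝ with hA
  set A' : Matrix S S ℝ := (G.induce S).adjMatrix ℝ with hA'
  -- entry facts
  have hAx : ∀ u, A x u = if u = y then 1 else 0 := by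
    intro u; rw [hA, SimpleGraph.adjMatrix_apply]
    simp only [hadjx]
  have hAux : ∀ v, A v x = if v = y then 1 else 0 := by
    intro v
    have : A v x = A x v := by rw [hA]; simp [SimpleGraph.adjMatrix_apply, SimpleGraph.adj_comm]
    rw [this, hAx]
  have hA'entry : ∀ (a b : S), A' a b = A (↑a) (↑b) := by
    intro a b
    rw [hA', hA, SimpleGraph.adjMatrix_apply, SimpleGraph.adjMatrix_apply]
    have hiff : (G.induce S).Adj a b ↔ G.Adj ↑a ↑b := SimpleGraph.comap_adj
    by_cases hadj : G.Adj ↑a ↑b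
    · rw [if_pos hadj, if_pos (hiff.mpr hadj)]
    · rw [if_neg hadj, if_neg (fun hc => hadj (hiff.mp hc))]
  -- the sum split specialized to S
  have hsplit : ∀ F : V → ℝ, ∑ u, F u = F x + F y + ∑ u : S, F ↑u := by
    intro F
    exact sum_split_two x y hne (p := fun u => u ∈ S) (fun u => Iff.rfl) F
  -- kernel elements vanish at y
  have hfy : ∀ f : V → ℝ, f ∈ LinearMap.ker (Matrix.toLin' A) → f y = 0 := by
    intro f hf
    have hx := (ker_toLin'_iff A f).1 hf x
    have : ∑ u, A x u * f u = f y := by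
      rw [Finset.sum_eq_single y]
      · rw [hAx]; simp
      · intro b _ hb; rw [hAx]; simp [hb]
      · intro hy; exact absurd (Finset.mem_univ y) hy
    rw [this] at hx
    exact hx
  -- restriction map
  set L : (V → ℝ) →ₗ[ℝ] (S → ℝ) := LinearMap.funLeft ℝ ℝ (Subtype.val : S → V) with hL
  have hrestrict : ∀ f ∈ LinearMap.ker (Matrix.toLin' A),
      L f ∈ LinearMap.ker (Matrix.toLin' A') := by
    intro f hf
    rw [ker_toLin'_iff]
    intro v
    have hfull := (ker_toLin'_iff A f).1 hf ↑v
    rw [hsplit (fun u => A ↑v u * f u)] at hfull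
    have h1 : A ↑v x = 0 := by rw [hAux]; simp [v.2.2]
    have h2 : f y = 0 := hfy f hf
    have : ∑ u : S, A ↑v ↑u * f ↑u = 0 := by
      rw [h1, h2] at hfull; simpa using hfull
    calc ∑ u : S, A' v u * L f u = ∑ u : S, A ↑v ↑u * f ↑u := by
          apply Finset.sum_congr rfl
          intro u _
          rw [hA'entry, hL]
          rfl
      _ = 0 := this
  set φ : LinearMap.ker (Matrix.toLin' A) →ₗ[ℝ] LinearMap.ker (Matrix.toLin' A') :=
    (L.comp (LinearMap.ker (Matrix.toLin' A)).subtype).codRestrict _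
      (fun c => hrestrict c c.2) with hφ
  have hinj : Function.Injective φ := by
    intro f g hfg
    ext v
    have hres : ∀ u : S, (f : V → ℝ) ↑u = (g : V → ℝ) ↑u := by
      intro u
      have := congrFun (Subtype.ext_iff.1 hfg) u
      simpa [hφ, hL, LinearMap.funLeft] using this
    by_cases hvx : v = x
    · -- from the equation at y
      rw [hvx]
      have hf := (ker_toLin'_iff A _).1 f.2 y
      have hg := (ker_toLin'_iff A _).1 g.2 y
      rw [hsplit (fun u => A y u * (f : V → ℝ) u)] at hf
      rw [hsplit (fun u => A y u * (g : V → ℝ) u)] at hg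
      have hSsum : ∑ u : S, A y ↑u * (f : V → ℝ) ↑u = ∑ u : S, A y ↑u * (g : V → ℝ) ↑u := by
        apply Finset.sum_congr rfl
        intro u _; rw [hres u]
      have hyx : A y x = 1 := by rw [hAux]; simp
      have hfyy : (f : V → ℝ) y = 0 := hfy _ f.2
      have hgyy : (g : V → ℝ) y = 0 := hfy _ g.2
      have hAyy : A y y = 0 := by rw [hA]; simp
      rw [hyx, hAyy, hfyy] at hf
      rw [hyx, hAyy, hgyy] at hg
      simp only [one_mul, mul_zero, add_zero, zero_mul] at hf hg
      -- hf : f x + 0 + ∑ = 0 etc.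
      have := hf.trans hg.symm
      linarith [this, hSsum.symm ▸ this]
    · by_cases hvy : v = y
      · rw [hvy, hfy _ f.2, hfy _ g.2]
      · exact hres ⟨v, ⟨hvx, hvy⟩⟩
  have hsurj : Function.Surjective φ := by
    rintro ⟨g, hg⟩
    set c : ℝ := -∑ u : S, A y ↑u * g u with hc
    set f : V → ℝ := fun v => if hv : v ≠ x ∧ v ≠ y then g ⟨v, hv⟩ else if v = x then c else 0
      with hfdef
    have hfx : f x = c := by rw [hfdef]; simp [hne]
    have hfyv : f y = 0 := by rw [hfdef]; simp [hne.symm]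
    have hfS : ∀ u : S, f ↑u = g u := by
      intro u
      have h1 : f ↑u = g ⟨↑u, u.2⟩ := by rw [hfdef]; exact dif_pos u.2
      rw [h1]
    have hfker : f ∈ LinearMap.ker (Matrix.toLin' A) := by
      rw [ker_toLin'_iff]
      intro v
      rw [hsplit (fun u => A v u * f u)]
      have hSsum : ∑ u : S, A v ↑u * f ↑u = ∑ u : S, A v ↑u * g u := by
        apply Finset.sum_congr rfl
        intro u _; rw [hfS u]
      by_cases hvx : v = x
      · rw [hvx]
        have hAxx : A x x = 0 := by rw [hA]; simp
        have hterm : ∑ u : S, A x ↑u * g u = 0 := by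
          apply Finset.sum_eq_zero
          intro u _
          rw [hAx]
          simp [u.2.2]
        have hSsum' : ∑ u : S, A x ↑u * f ↑u = ∑ u : S, A x ↑u * g u := by
          apply Finset.sum_congr rfl
          intro u _; rw [hfS u]
        rw [hAxx, hAx, hSsum', hterm]
        simp [hne.symm, hfyv]
      · by_cases hvy : v = y
        · rw [hvy]
          have hyx : A y x = 1 := by rw [hAux]; simp
          have hAyy : A y y = 0 := by rw [hA]; simp
          have hSsum' : ∑ u : S, A y ↑u * f ↑u = ∑ u : S, A y ↑u * g u := by
            apply Finset.sum_congr rfl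
            intro u _; rw [hfS u]
          rw [hyx, hAyy, hSsum', hfx, hfyv]
          rw [hc]; ring
        · -- v ∈ S : use that g is in the kernel of A'
          have hvS : v ∈ S := ⟨hvx, hvy⟩
          have hvx0 : A v x = 0 := by rw [hAux]; simp [hvy]
          have hgv := (ker_toLin'_iff A' g).1 hg ⟨v, hvS⟩
          have : ∑ u : S, A v ↑u * g u = 0 := by
            rw [← hgv]
            apply Finset.sum_congr rfl
            intro u _
            rw [hA'entry]
          rw [hvx0, hfyv, hSsum, this]
          ring
    refine ⟨⟨f, hfker⟩, ?_⟩
    apply Subtype.ext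
    funext u
    have : (φ ⟨f, hfker⟩ : S → ℝ) u = f ↑u := rfl
    rw [this, hfS]
  have e : LinearMap.ker (Matrix.toLin' A) ≃ₗ[ℝ] LinearMap.ker (Matrix.toLin' A') :=
    LinearEquiv.ofBijective φ ⟨hinj, hsurj⟩
  rw [eigMult, eigMult, Module.End.eigenspace_zero, Module.End.eigenspace_zero]
  exact e.finrank_eq
end

section
/- Let X be a star set for an eigenvalue μ in a graph G, and let U be a proper subset of X. Then X \ U is a star set for μ in G − U. -/
open SimpleGraph Matrix Module

section Aux
set_option linter.unusedSectionVars false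

variable {V W : Type*} [Fintype V] [Fintype W] [DecidableEq V] [DecidableEq W]

/-- 0-1 "selection" matrix for a map `c : W → V`. -/
noncomputable def Emat (c : W → V) : Matrix V W ℝ := fun v w => if v = c w then 1 else 0

lemma Emat_conj (M : Matrix V V ℝ) (c : W → V) :
    (Emat c)ᵀ * M * (Emat c) = M.submatrix c c := by
  ext i j
  simp [Matrix.mul_apply, Emat, Matrix.transpose_apply, ite_mul, mul_ite, mul_one, mul_zero,
    Finset.sum_ite_eq, Finset.sum_ite_eq']

lemma rank_submatrix_le' (M : Matrix V V ℝ) (c : W → V) :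
    (M.submatrix c c).rank ≤ M.rank := by
  rw [← Emat_conj]
  exact le_trans (Matrix.rank_mul_le_left _ _) (Matrix.rank_mul_le_right _ _)

lemma sub_smul_one_submatrix (M : Matrix V V ℝ) (μ : ℝ) {c : W → V}
    (hc : Function.Injective c) :
    (M - μ • 1).submatrix c c = M.submatrix c c - μ • 1 := by
  ext i j
  simp [Matrix.submatrix_apply, Matrix.one_apply, hc.eq_iff]

lemma adjMatrix_induce (G : SimpleGraph V) (s : Set V)
    {i1 : DecidableRel (G.induce s).Adj} {i2 : DecidableRel G.Adj} :
    (G.induce s).adjMatrix ℝ =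
      ((G.adjMatrix ℝ).submatrix (Subtype.val : s → V) Subtype.val) := by
  ext i j
  simp only [SimpleGraph.adjMatrix_apply, Matrix.submatrix_apply, SimpleGraph.comap_adj,
    Function.Embedding.coe_subtype]

lemma eigMult_eq_finrank (G : SimpleGraph V) (μ : ℝ) [i : DecidableRel G.Adj] :
    eigMult G μ =
      Module.finrank ℝ (Module.End.eigenspace (Matrix.toLin' (G.adjMatrix ℝ)) μ) := by
  unfold eigMult
  congr!

lemma finrank_eig (M : Matrix V V ℝ) (μ : ℝ) :
    Module.finrank ℝ (Module.End.eigenspace (Matrix.toLin' M) μ) +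
      (M - μ • (1 : Matrix V V ℝ)).rank = Fintype.card V := by
  have h1 : Matrix.toLin' (M - μ • 1) =
      Matrix.toLin' M - μ • (1 : Module.End ℝ (V → ℝ)) := by
    rw [map_sub]
    congr 1
    rw [_root_.map_smul, Matrix.toLin'_one]
    rfl
  have h2 : (Module.End.eigenspace (Matrix.toLin' M) μ) =
      LinearMap.ker (Matrix.toLin' (M - μ • 1)) := by
    rw [Module.End.eigenspace_def, ← h1]
  have h3 := LinearMap.finrank_range_add_finrank_ker (Matrix.toLin' (M - μ • (1 : Matrix V V ℝ)))
  rw [Module.finrank_fintype_fun_eq_card] at h3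
  have h4 : (M - μ • (1 : Matrix V V ℝ)).rank = Module.finrank ℝ
      (LinearMap.range (Matrix.toLin' (M - μ • (1 : Matrix V V ℝ)))) := by
    rw [Matrix.rank, Matrix.toLin'_apply']
  rw [h2]
  omega

lemma main_ranks (G : SimpleGraph V) (μ : ℝ) [i : DecidableRel G.Adj] (s : Set V) [Fintype s] :
    eigMult (G.induce s) μ +
      ((((G.adjMatrix ℝ) - μ • (1 : Matrix V V ℝ)).submatrix (Subtype.val : s → V)
        Subtype.val : Matrix s s ℝ)).rank = Fintype.card s := by
  classical
  rw [eigMult_eq_finrank (G.induce s) μ]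
  have h := finrank_eig ((G.adjMatrix ℝ).submatrix (Subtype.val : s → V) Subtype.val) μ
  rw [adjMatrix_induce G s,
    sub_smul_one_submatrix _ μ (Subtype.val_injective : Function.Injective (Subtype.val : s → V))]
  exact h

lemma main_ranks₂ (G : SimpleGraph V) (μ : ℝ) [i : DecidableRel G.Adj] (s : Set V) [Fintype s]
    (t : Set s) [Fintype t] :
    eigMult ((G.induce s).induce t) μ +
      (((G.adjMatrix ℝ) - μ • (1 : Matrix V V ℝ)).submatrix
        ((Subtype.val : s → V) ∘ (Subtype.val : t → s))
        ((Subtype.val : s → V) ∘ (Subtype.val : t → s))).rank = Fintype.card t := by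
  classical
  rw [eigMult_eq_finrank ((G.induce s).induce t) μ]
  have h := finrank_eig ((G.adjMatrix ℝ).submatrix
    ((Subtype.val : s → V) ∘ (Subtype.val : t → s))
    ((Subtype.val : s → V) ∘ (Subtype.val : t → s))) μ
  have hinj : Function.Injective ((Subtype.val : s → V) ∘ (Subtype.val : t → s)) :=
    Subtype.val_injective.comp Subtype.val_injective
  rw [adjMatrix_induce (G.induce s) t, adjMatrix_induce G s, Matrix.submatrix_submatrix,
    sub_smul_one_submatrix _ μ hinj]
  · exact h
  · exact Classical.decRel _

lemma main_ranks₂' (G : SimpleGraph V) (μ : ℝ) [i : DecidableRel G.Adj] (s : Set V) [Fintype s]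
    (t : Set s) [Fintype t] (s2 : Set V) [Fintype s2] (σ : t ≃ s2)
    (hσ : ∀ w : t, (((w : s) : V)) = ((σ w : s2) : V)) :
    eigMult ((G.induce s).induce t) μ +
      ((((G.adjMatrix ℝ) - μ • (1 : Matrix V V ℝ)).submatrix (Subtype.val : s2 → V)
        Subtype.val : Matrix s2 s2 ℝ)).rank = Fintype.card t := by
  have h := main_ranks₂ G μ s t
  have heq : ((G.adjMatrix ℝ) - μ • (1 : Matrix V V ℝ)).submatrix
        ((Subtype.val : s → V) ∘ (Subtype.val : t → s))
        ((Subtype.val : s → V) ∘ (Subtype.val : t → s)) =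
      ((((G.adjMatrix ℝ) - μ • (1 : Matrix V V ℝ)).submatrix (Subtype.val : s2 → V)
        Subtype.val : Matrix s2 s2 ℝ)).submatrix σ σ := by
    ext i j
    simp only [Matrix.submatrix_apply, Function.comp_apply]
    rw [← hσ i, ← hσ j]
  rw [heq, Matrix.rank_submatrix] at h
  exact h

lemma rank_le_of_subset (A : Matrix V V ℝ) (s2 s1 : Set V) [Fintype s1] [Fintype s2]
    (h : s2 ⊆ s1) :
    ((A.submatrix (Subtype.val : s2 → V) Subtype.val : Matrix s2 s2 ℝ)).rank ≤
      ((A.submatrix (Subtype.val : s1 → V) Subtype.val : Matrix s1 s1 ℝ)).rank := by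
  have heq : (A.submatrix (Subtype.val : s2 → V) Subtype.val : Matrix s2 s2 ℝ) =
      (A.submatrix (Subtype.val : s1 → V) Subtype.val : Matrix s1 s1 ℝ).submatrix
        (Set.inclusion h) (Set.inclusion h) := by
    ext i j
    rfl
  rw [heq]
  exact rank_submatrix_le' _ _

end Aux

theorem star_set_subset {V : Type*} [Fintype V] [DecidableEq V] (G : SimpleGraph V) (μ : ℝ)
    (X U : Finset V) (hcard : X.card = eigMult G μ)
    (hstar : eigMult (G.induce {u | u ∉ X}) μ = 0) (hU : U ⊂ X) :
    (X \ U).card = eigMult (G.induce {u | u ∉ U}) μ ∧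
      eigMult ((G.induce {u | u ∉ U}).induce {w : {u : V // u ∉ U} | (w : V) ∉ X}) μ = 0 := by
  classical
  have hUX : U ⊆ X := hU.subset
  set n := Fintype.card V with hn
  set s1 : Set V := {u | u ∉ U} with hs1
  set s2 : Set V := {u | u ∉ X} with hs2
  set t : Set ({u : V // u ∉ U}) := {w : {u : V // u ∉ U} | (w : V) ∉ X} with ht
  haveI i : DecidableRel G.Adj := Classical.decRel _
  set A : Matrix V V ℝ := G.adjMatrix ℝ - μ • 1 with hA
  have h0 : eigMult G μ + A.rank = n := by
    rw [eigMult_eq_finrank G μ, hA, hn]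
    exact finrank_eig _ μ
  have h1 := main_ranks G μ s1
  have h2 := main_ranks G μ s2
  let σ : t ≃ s2 :=
    { toFun := fun w => ⟨((w : {u : V // u ∉ U}) : V), w.2⟩
      invFun := fun v => ⟨⟨(v : V), fun h => v.2 (hUX h)⟩, v.2⟩
      left_inv := fun w => by ext; rfl
      right_inv := fun v => by ext; rfl }
  have h3 := main_ranks₂' G μ s1 t s2 σ (fun w => rfl)
  rw [← hA] at h1 h2 h3
  have h1' : eigMult (G.induce s1) μ +
      ((A.submatrix (Subtype.val : s1 → V) Subtype.val : Matrix s1 s1 ℝ)).rank =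
      Fintype.card s1 := h1
  have h2' : eigMult (G.induce s2) μ +
      ((A.submatrix (Subtype.val : s2 → V) Subtype.val : Matrix s2 s2 ℝ)).rank =
      Fintype.card s2 := h2
  have h3' : eigMult ((G.induce s1).induce t) μ +
      ((A.submatrix (Subtype.val : s2 → V) Subtype.val : Matrix s2 s2 ℝ)).rank =
      Fintype.card t := h3
  clear h1 h2 h3
  have hts2 : Fintype.card t = Fintype.card s2 := Fintype.card_congr σ
  -- rank inequalities
  have le1 : ((A.submatrix (Subtype.val : s1 → V) Subtype.val : Matrix s1 s1 ℝ)).rank ≤ A.rank :=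
    rank_submatrix_le' A _
  have hsub : s2 ⊆ s1 := fun u hu h => hu (hUX h)
  have le2 := rank_le_of_subset A s2 s1 hsub
  -- cardinalities
  have hcs1 : Fintype.card s1 = n - U.card := by
    calc Fintype.card s1 = Fintype.card {x : V // ¬ x ∈ U} :=
          Fintype.card_congr (Equiv.subtypeEquivRight fun x => Iff.rfl)
      _ = Fintype.card V - Fintype.card {x : V // x ∈ U} := Fintype.card_subtype_compl _
      _ = n - U.card := by rw [Fintype.card_coe, hn]
  have hcs2 : Fintype.card s2 = n - X.card := by
    calc Fintype.card s2 = Fintype.card {x : V // ¬ x ∈ X} :=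
          Fintype.card_congr (Equiv.subtypeEquivRight fun x => Iff.rfl)
      _ = Fintype.card V - Fintype.card {x : V // x ∈ X} := Fintype.card_subtype_compl _
      _ = n - X.card := by rw [Fintype.card_coe, hn]
  have hXn : X.card ≤ n := Finset.card_le_univ X
  have hUn : U.card ≤ X.card := Finset.card_le_card hUX
  have hsd : (X \ U).card = X.card - U.card := Finset.card_sdiff_of_subset hUX
  rw [hstar] at h2'
  have g1 : eigMult (G.induce s1) μ = (X \ U).card := by omega
  have g2 : eigMult ((G.induce s1).induce t) μ = 0 := by omega
  exact ⟨g1.symm, g2⟩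
end

section
/- Let G be a graph and u, v two distinct vertices with N[u] = N[v] (equal closed neighborhoods, so in particular u ∼ v). Then m_G(−1) = m_{G−u}(−1) + 1. -/
open SimpleGraph Matrix Module

/-
N[u] = N[v] says exactly that rows (and, by symmetry, columns) u and v of A + I coincide,
so deleting row and column u does not change the rank of A + I. Since the multiplicity of
-1 is the nullity of A + I, it drops by exactly one, together with the number of vertices.
-/

namespace Matrix

theorem finrank_eigenspace_toLin'_add_rank_sub_smul {n K : Type*} [Fintype n] [DecidableEq n]
    [Field K] (A : Matrix n n K) (μ : K) :
    finrank K (End.eigenspace (toLin' A) μ) + (A - μ • 1).rank = Fintype.card n := by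
  have hker : End.eigenspace (toLin' A) μ = LinearMap.ker (toLin' (A - μ • 1)) := by
    rw [End.eigenspace_def, map_sub, map_smul, toLin'_one, End.one_eq_id]
  rw [hker, rank, ← toLin'_apply', add_comm, LinearMap.finrank_range_add_finrank_ker,
    finrank_fintype_fun_eq_card]

theorem rank_submatrix_ne_of_row_eq_of_col_eq {n R : Type*} [Fintype n] [DecidableEq n]
    [CommSemiring R] [StrongRankCondition R] (M : Matrix n n R) {u v : n} (huv : u ≠ v)
    (hrow : M u = M v) (hcol : ∀ i, M i u = M i v) :
    (M.submatrix ((↑) : {w | w ≠ u} → n) ((↑) : {w | w ≠ u} → n)).rank = M.rank := by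
  let collapse : n → {w | w ≠ u} := fun w =>
    if hw : w = u then ⟨v, huv.symm⟩ else ⟨w, hw⟩
  have hcollapse : M = (M.submatrix Subtype.val Subtype.val).submatrix collapse collapse := by
    ext i j
    by_cases hi : i = u <;> by_cases hj : j = u <;> simp [collapse, hi, hj, hrow, hcol]
  refine (rank_submatrix_le M Subtype.val Subtype.val).antisymm ?_
  conv_lhs => rw [hcollapse]
  exact rank_submatrix_le _ collapse collapse

end Matrix

namespace SimpleGraph

variable {V R : Type*} [DecidableEq V] (G : SimpleGraph V) [DecidableRel G.Adj]

theorem adjMatrix_add_one_apply [NonAssocSemiring R] (i j : V) :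
    (G.adjMatrix R + 1) i j = if j ∈ insert i (G.neighborSet i) then 1 else 0 := by
  by_cases hij : j = i
  · subst hij
    simp
  · simp [adjMatrix_apply, one_apply, hij, Ne.symm hij]

theorem adjMatrix_add_one_row_eq [NonAssocSemiring R] {u v : V}
    (h : insert u (G.neighborSet u) = insert v (G.neighborSet v)) :
    (G.adjMatrix R + 1) u = (G.adjMatrix R + 1) v := by
  ext j
  simp only [adjMatrix_add_one_apply, h]

theorem adjMatrix_add_one_col_eq [NonAssocSemiring R] {u v : V}
    (h : insert u (G.neighborSet u) = insert v (G.neighborSet v)) (i : V) :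
    (G.adjMatrix R + 1) i u = (G.adjMatrix R + 1) i v := by
  have hsymm : (G.adjMatrix R + 1).IsSymm := G.isSymm_adjMatrix.add isSymm_one
  simpa only [hsymm.apply] using congrFun (adjMatrix_add_one_row_eq G h) i

theorem adjMatrix_induce_add_one [NonAssocSemiring R] (s : Set V)
    [DecidableRel (G.induce s).Adj] :
    (G.induce s).adjMatrix R + 1 = (G.adjMatrix R + 1).submatrix Subtype.val Subtype.val := by
  ext i j
  simp [one_apply, Subtype.ext_iff]

end SimpleGraph

theorem eigMult_eq_finrank_eigenspace {V : Type*} [Fintype V] [DecidableEq V]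
    (G : SimpleGraph V) [DecidableRel G.Adj] (μ : ℝ) :
    eigMult G μ = finrank ℝ (End.eigenspace (toLin' (G.adjMatrix ℝ)) μ) := by
  unfold eigMult
  congr!

theorem eigMult_neg_one_add_rank_adjMatrix_add_one {V : Type*} [Fintype V] [DecidableEq V]
    (G : SimpleGraph V) [DecidableRel G.Adj] :
    eigMult G (-1) + (G.adjMatrix ℝ + 1).rank = Fintype.card V := by
  rw [eigMult_eq_finrank_eigenspace]
  simpa using finrank_eigenspace_toLin'_add_rank_sub_smul (G.adjMatrix ℝ) (-1)

open scoped Classical in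
theorem eigMult_neg_one_duplicate_vertex {V : Type*} [Fintype V] (G : SimpleGraph V) (u v : V)
    (huv : u ≠ v) (h : insert u (G.neighborSet u) = insert v (G.neighborSet v)) :
    eigMult G (-1) = eigMult (G.induce {w | w ≠ u}) (-1) + 1 := by
  have hG := eigMult_neg_one_add_rank_adjMatrix_add_one G
  have hG' := eigMult_neg_one_add_rank_adjMatrix_add_one (G.induce {w | w ≠ u})
  rw [adjMatrix_induce_add_one, rank_submatrix_ne_of_row_eq_of_col_eq _ huv
    (adjMatrix_add_one_row_eq G h) (adjMatrix_add_one_col_eq G h), Set.card_ne_eq] at hG'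
  have hV : 0 < Fintype.card V := Fintype.card_pos_iff.mpr ⟨u⟩
  omega
end

section
/- Let H be an induced subgraph of a connected simple graph G with rank(A(H) + I) ≥ rank(A(G) + I) − 1, and let v ∈ V(G) \ V(H). If v is adjacent to some vertex h of H and N_H(v) = N_H[h] (the neighbors of v inside H equal the closed neighborhood of h in H), then N_G[v] = N_G[h]. -/
open SimpleGraph Matrix Module

open scoped Classical in
theorem closed_neighborhood_eq {V : Type*} [Fintype V] (G : SimpleGraph V) (hG : G.Connected)
    (s : Set V)
    (hrank : (G.adjMatrix ℝ + (1 : Matrix V V ℝ)).rank ≤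
      ((G.induce s).adjMatrix ℝ + (1 : Matrix s s ℝ)).rank + 1)
    (v w : V) (hv : v ∉ s) (hw : w ∈ s) (hvw : G.Adj v w)
    (hN : {u ∈ s | G.Adj v u} = insert w {u ∈ s | G.Adj w u}) :
    insert v (G.neighborSet v) = insert w (G.neighborSet w) := by
  set M : Matrix V V ℝ := G.adjMatrix ℝ + 1 with hMdef
  set N : Matrix s s ℝ := (G.induce s).adjMatrix ℝ + 1 with hNdef
  have hvne : v ≠ w := fun h => hv (h ▸ hw)
  have hM : ∀ a b : V, M a b = (if G.Adj a b then 1 else 0) + (if a = b then 1 else 0) := by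
    intro a b
    simp [hMdef, Matrix.one_apply, Matrix.add_apply]
  have hMsymm : ∀ a b : V, M a b = M b a := by
    intro a b
    rw [hM, hM, G.adj_comm]
    by_cases h : a = b <;> simp [h, eq_comm]
  have hNM : ∀ i j : s, N i j = M (↑i) (↑j) := by
    intro i j
    rw [hM]
    simp [hNdef, Matrix.one_apply, Matrix.add_apply, Subtype.ext_iff]
  -- the adjacency condition, pointwise
  have hAdj : ∀ t, t ∈ s → (G.Adj v t ↔ t = w ∨ G.Adj w t) := by
    intro t ht
    have h1 : t ∈ {u ∈ s | G.Adj v u} ↔ t ∈ insert w {u ∈ s | G.Adj w u} := by rw [hN]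
    simpa [ht] using h1
  -- rows of M at v and w agree on s
  have hrow : ∀ t, t ∈ s → M t v = M t w := by
    intro t ht
    have htv : t ≠ v := fun h => hv (h ▸ ht)
    rw [hM, hM, if_neg htv]
    by_cases htw : t = w
    · subst htw
      simp [G.adj_comm, hvw]
    · have : G.Adj v t ↔ G.Adj w t := by
        rw [hAdj t ht]
        simp [htw]
      rw [G.adj_comm t v, G.adj_comm t w, if_neg htw]
      simp [this]
  -- the difference of columns v and w of M
  set x : V → ℝ := M.mulVec (Pi.single v 1 - Pi.single w 1) with hxdef
  have hxu : ∀ u, x u = M u v - M u w := by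
    intro u
    simp [hxdef, Matrix.mulVec, dotProduct, Pi.single_apply, mul_ite, sub_mul,
      Finset.sum_sub_distrib, mul_comm]
  have hxs : ∀ t, t ∈ s → x t = 0 := by
    intro t ht
    rw [hxu, hrow t ht, sub_self]
  have hxv : x v = 0 := by
    rw [hxu, hM, hM]
    simp [hvne, G.ne_of_adj hvw, hvw, G.adj_comm]
  have hxw : x w = 0 := by
    rw [hxu, hM, hM]
    simp [hvne.symm, hvw, G.adj_comm]
  -- main claim : x = 0
  have hx0 : x = 0 := by
    by_contra hx
    -- setup
    set π : (V → ℝ) →ₗ[ℝ] (s → ℝ) := LinearMap.funLeft ℝ ℝ (Subtype.val : s → V) with hπdef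
    set C : Submodule ℝ (V → ℝ) := LinearMap.range M.mulVecLin with hCdef
    set f : C →ₗ[ℝ] (s → ℝ) := π ∘ₗ C.subtype with hfdef
    have hxC : x ∈ C := ⟨Pi.single v 1 - Pi.single w 1, rfl⟩
    have hπx : π x = 0 := by
      funext t
      exact hxs t t.2
    -- extension of vectors on s by zero
    have hsum : ∀ g : V → ℝ, (∀ j, j ∉ s → g j = 0) → ∑ j, g j = ∑ j : s, g ↑j := by
      intro g hg
      rw [← Finset.sum_subtype (s.toFinset) (fun x => Set.mem_toFinset) g]
      refine (Finset.sum_subset (Finset.subset_univ _) ?_).symm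
      intro j _ hj
      exact hg j (by simpa [Set.mem_toFinset] using hj)
    have key : ∀ a : s → ℝ,
        π (M.mulVec (fun t => if h : t ∈ s then a ⟨t, h⟩ else 0)) = N.mulVec a := by
      intro a
      funext i
      have : (M.mulVec (fun t => if h : t ∈ s then a ⟨t, h⟩ else 0)) ↑i
          = ∑ j : s, M ↑i ↑j * a j := by
        rw [Matrix.mulVec, dotProduct,
          hsum (fun j => M ↑i j * if h : j ∈ s then a ⟨j, h⟩ else 0)
            (by intro j hj; simp [hj])]
        refine Finset.sum_congr rfl fun j _ => ?_
        simp [j.2]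
      simp only [hπdef, LinearMap.funLeft_apply, Function.comp_apply]
      rw [this, Matrix.mulVec, dotProduct]
      refine Finset.sum_congr rfl fun j _ => ?_
      rw [hNM]
    have hmem : ∀ a : s → ℝ, M.mulVec (fun t => if h : t ∈ s then a ⟨t, h⟩ else 0) ∈ C :=
      fun a => ⟨_, rfl⟩
    -- range of N.mulVecLin is contained in range of f
    have hle : LinearMap.range N.mulVecLin ≤ LinearMap.range f := by
      rintro z ⟨a, rfl⟩
      refine ⟨⟨_, hmem a⟩, ?_⟩
      simp only [hfdef, LinearMap.comp_apply, Submodule.subtype_apply, Matrix.mulVecLin_apply]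
      exact key a
    have hNrank : N.rank = finrank ℝ (LinearMap.range N.mulVecLin) := rfl
    have hMrank : M.rank = finrank ℝ C := rfl
    have hrn := LinearMap.finrank_range_add_finrank_ker f
    have hge : N.rank ≤ finrank ℝ (LinearMap.range f) := by
      rw [hNrank]; exact Submodule.finrank_mono hle
    -- x gives a nonzero element of ker f
    have hxker : (⟨x, hxC⟩ : C) ∈ LinearMap.ker f := by
      simp only [hfdef, LinearMap.mem_ker, LinearMap.comp_apply, Submodule.subtype_apply]
      exact hπx
    have hxne : (⟨x, hxC⟩ : C) ≠ 0 := by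
      intro h
      exact hx (congrArg Subtype.val h)
    have hspan_le : Submodule.span ℝ {(⟨x, hxC⟩ : C)} ≤ LinearMap.ker f := by
      rw [Submodule.span_singleton_le_iff_mem]; exact hxker
    have hspan1 : finrank ℝ (Submodule.span ℝ {(⟨x, hxC⟩ : C)}) = 1 :=
      finrank_span_singleton hxne
    have hker1 : 1 ≤ finrank ℝ (LinearMap.ker f) := by
      rw [← hspan1]; exact Submodule.finrank_mono hspan_le
    have hCle : finrank ℝ C ≤ N.rank + 1 := by rw [← hMrank]; exact hrank
    have hrangele : finrank ℝ (LinearMap.range f) ≤ N.rank := by omega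
    have hker_eq : LinearMap.ker f = Submodule.span ℝ {(⟨x, hxC⟩ : C)} := by
      refine (Submodule.eq_of_le_of_finrank_le hspan_le ?_).symm
      rw [hspan1]; omega
    have hrange_eq : LinearMap.range N.mulVecLin = LinearMap.range f :=
      Submodule.eq_of_le_of_finrank_le hle (by rw [← hNrank]; exact hrangele)
    -- now show x u = 0 for every u
    have hxall : ∀ u, x u = 0 := by
      intro u
      have hcuC : M.mulVec (Pi.single u 1) ∈ C := ⟨_, rfl⟩
      have : f ⟨M.mulVec (Pi.single u 1), hcuC⟩ ∈ LinearMap.range f :=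
        LinearMap.mem_range_self f _
      rw [← hrange_eq] at this
      obtain ⟨a, ha⟩ := this
      set y : V → ℝ := fun t => if h : t ∈ s then a ⟨t, h⟩ else 0 with hydef
      have hzC : M.mulVec (Pi.single u 1) - M.mulVec y ∈ C :=
        C.sub_mem hcuC (hmem a)
      have ha' : π (M.mulVec (Pi.single u 1)) = N.mulVec a := by
        exact ha.symm
      have hzker : (⟨_, hzC⟩ : C) ∈ LinearMap.ker f := by
        simp only [hfdef, LinearMap.mem_ker, LinearMap.comp_apply, Submodule.subtype_apply]
        rw [map_sub, ha', hydef, key a, sub_self]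
      rw [hker_eq, Submodule.mem_span_singleton] at hzker
      obtain ⟨lam, hlam⟩ := hzker
      have hz : M.mulVec (Pi.single u 1) - M.mulVec y = lam • x :=
        (congrArg Subtype.val hlam).symm
      -- evaluate at v and w
      have hv' : M.mulVec (Pi.single u 1) v - (M.mulVec y) v = lam * x v := by
        have := congrFun hz v; simpa using this
      have hw' : M.mulVec (Pi.single u 1) w - (M.mulVec y) w = lam * x w := by
        have := congrFun hz w; simpa using this
      have hcu : ∀ b, M.mulVec (Pi.single u 1) b = M b u := by
        intro b
        simp [Matrix.mulVec, dotProduct, Pi.single_apply, mul_ite]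
      have hyMvw : (M.mulVec y) v = (M.mulVec y) w := by
        simp only [Matrix.mulVec, dotProduct]
        refine Finset.sum_congr rfl fun j _ => ?_
        by_cases hj : j ∈ s
        · have : M v j = M w j := by
            rw [hMsymm v j, hMsymm w j]; exact hrow j hj
          rw [this]
        · simp [hydef, hj]
      have e1 : M.mulVec (Pi.single u 1) v = (M.mulVec y) v := by
        rw [hxv, mul_zero] at hv'; linarith
      have e2 : M.mulVec (Pi.single u 1) w = (M.mulVec y) w := by
        rw [hxw, mul_zero] at hw'; linarith
      rw [hxu, hMsymm u v, hMsymm u w, ← hcu v, ← hcu w, e1, e2, hyMvw, sub_self]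
    exact hx (funext hxall)
  -- conclude
  have hMvw : ∀ u, M u v = M u w := by
    intro u
    have h := congrFun hx0 u
    rw [hxu] at h
    simp only [Pi.zero_apply] at h
    linarith
  ext u
  simp only [Set.mem_insert_iff, mem_neighborSet]
  have h1 := hMvw u
  rw [hM, hM] at h1
  constructor
  · rintro (rfl | h)
    · exact Or.inr (hvw.symm)
    · by_cases huw : u = w
      · exact Or.inl huw
      · right
        rw [G.adj_comm]
        by_cases huv : u = v
        · exact absurd huv.symm (G.ne_of_adj h)
        · rw [G.adj_comm v u] at h
          simp [h, huv, huw] at h1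
          by_contra hA
          simp [hA] at h1
  · rintro (rfl | h)
    · exact Or.inr hvw
    · by_cases huv : u = v
      · exact Or.inl huv
      · right
        rw [G.adj_comm]
        by_cases huw : u = w
        · exact absurd huw.symm (G.ne_of_adj h)
        · rw [G.adj_comm w u] at h
          simp [h, huv, huw] at h1
          by_contra hA
          simp [hA] at h1
end

section
/- Let G be the graph P_{d+1} ⋄ W obtained from a path v_0 v_1 ⋯ v_d with d ≥ 7, d ≡ 1 (mod 3), by attaching, for each v_j ∈ W ⊆ {v_3, v_6, …, v_{d−4}} (indices divisible by 3), a new vertex u_j adjacent exactly to v_j and v_{j+1}. Then G has n = d + 1 + |W| vertices, diameter d, and m_G(−1) = n − d = |W| + 1. -/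
open SimpleGraph Matrix Module

-- The graph `P_{d+1} ⋄ W`: the path `v_0 v_1 ⋯ v_d` together with, for each `j ∈ W`,
-- an extra vertex adjacent exactly to `v_j` and `v_{j+1}`.
def diamondGraph (d : ℕ) (W : Finset ℕ) : SimpleGraph (Fin (d + 1) ⊕ {j // j ∈ W}) :=
  SimpleGraph.fromRel (fun a b =>
    match a, b with
    | Sum.inl i, Sum.inl k => (i : ℕ) + 1 = (k : ℕ)
    | Sum.inl i, Sum.inr j => (i : ℕ) = j.1 ∨ (i : ℕ) = j.1 + 1
    | _, _ => False)

/-!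
Write `b_j` for the value of an eigenvector at `u_j` (and `b_j = 0` for `j ∉ W`). Along the path the
equations `A x = -x` read `x_{i-1} + x_i + x_{i+1} = -(b_{i-1} + b_i)`, a second-order recurrence,
so `x` is determined by `x_{v_0}` and the `b_j`. Conversely, with `p` the period-3 pattern
`1, -1, 0`, the sequence `x_i = p_i (a + ∑_{j<i} b_j)` solves all the equations: the one at `u_j`
because `j ≡ 0 (mod 3)`, the one at `v_d` because `d ≡ 1 (mod 3)`. Hence the (-1)-eigenspace is
isomorphic to `ℝ × ℝ^W`.

For the diameter, an edge changes the path index by at most one, so `v_0` and `v_d` are at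
distance `d`, and each pendant vertex is adjacent to a path vertex strictly inside the path.
-/

open Finset

lemma Fin.sum_ite_val_eq {M : Type*} [AddCommMonoid M] {n : ℕ} (y : Fin n → M) (a : ℕ) :
    ∑ k : Fin n, (if (k : ℕ) = a then y k else 0) = if h : a < n then y ⟨a, h⟩ else 0 := by
  split_ifs with h
  · rw [Fintype.sum_eq_single ⟨a, h⟩ fun k hk => if_neg fun e => hk (Fin.ext e), if_pos rfl]
  · exact Finset.sum_eq_zero fun k _ => if_neg fun e : (k : ℕ) = a => h (e ▸ k.isLt)

lemma Finset.sum_subtype_ite_val_eq {M : Type*} [AddCommMonoid M] (s : Finset ℕ) (y : s → M)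
    (a : ℕ) : ∑ k : s, (if (k : ℕ) = a then y k else 0) = if h : a ∈ s then y ⟨a, h⟩ else 0 := by
  split_ifs with h
  · rw [Fintype.sum_eq_single ⟨a, h⟩ fun k hk => if_neg fun e => hk (Subtype.ext e), if_pos rfl]
  · exact Finset.sum_eq_zero fun k _ => if_neg fun e : (k : ℕ) = a => h (e ▸ k.2)

namespace SimpleGraph

lemma adjMatrix_mulVec_apply_sum {R α β : Type*} [NonAssocSemiring R] [Fintype α] [Fintype β]
    (G : SimpleGraph (α ⊕ β)) [DecidableRel G.Adj] (x : α ⊕ β → R) (v : α ⊕ β) :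
    (G.adjMatrix R *ᵥ x) v =
      (∑ a, if G.Adj v (.inl a) then x (.inl a) else 0) +
        ∑ b, if G.Adj v (.inr b) then x (.inr b) else 0 := by
  simp only [mulVec, dotProduct, adjMatrix_apply, ite_mul, one_mul, zero_mul,
    Fintype.sum_sum_type]

variable {V : Type*} {G : SimpleGraph V}

lemma Walk.le_add_length_of_adj {f : V → ℕ} (hf : ∀ u v, G.Adj u v → f v ≤ f u + 1) {u v : V}
    (w : G.Walk u v) : f v ≤ f u + w.length := by
  induction w with
  | nil => simp
  | cons h _ ih =>
    have := hf _ _ h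
    rw [Walk.length_cons]
    omega

lemma le_add_edist_of_adj {f : V → ℕ} (hf : ∀ u v, G.Adj u v → f v ≤ f u + 1) (u v : V) :
    (f v : ℕ∞) ≤ f u + G.edist u v := by
  rcases eq_or_ne (G.edist u v) ⊤ with h | h
  · simp [h]
  · obtain ⟨p, hp⟩ := exists_walk_of_edist_ne_top h
    rw [← hp]
    exact_mod_cast p.le_add_length_of_adj hf

end SimpleGraph

def negOnePattern (i : ℕ) : ℝ := if i % 3 = 0 then 1 else if i % 3 = 1 then -1 else 0

def negOneSeq (a : ℝ) (g : ℕ → ℝ) (i : ℕ) : ℝ := negOnePattern i * (a + ∑ k ∈ range i, g k)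

section negOneSeq

variable (a : ℝ) (g : ℕ → ℝ)

@[simp] lemma negOneSeq_zero : negOneSeq a g 0 = a := by
  simp [negOneSeq, negOnePattern]

lemma negOneSeq_one_add_zero : negOneSeq a g 1 + negOneSeq a g 0 + g 0 = 0 := by
  simp [negOneSeq, negOnePattern]

lemma negOneSeq_add_succ {m : ℕ} (hm : m % 3 = 0) :
    negOneSeq a g m + negOneSeq a g (m + 1) + g m = 0 := by
  have h₁ : (m + 1) % 3 = 1 := by omega
  simp [negOneSeq, negOnePattern, sum_range_succ, hm, h₁]
  ring

lemma negOneSeq_recurrence (hg : ∀ k, k % 3 ≠ 0 → g k = 0) (m : ℕ) :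
    negOneSeq a g (m + 2) + negOneSeq a g (m + 1) + negOneSeq a g m + g (m + 1) + g m = 0 := by
  have h₁ : (m + 1) % 3 = (m % 3 + 1) % 3 := by omega
  have h₂ : (m + 2) % 3 = (m % 3 + 2) % 3 := by omega
  rcases (by omega : m % 3 = 0 ∨ m % 3 = 1 ∨ m % 3 = 2) with h | h | h <;>
    simp [negOneSeq, negOnePattern, sum_range_succ, h, h₁, h₂, hg]

lemma eq_negOneSeq {f : ℕ → ℝ} {n : ℕ} (hg : ∀ k, k % 3 ≠ 0 → g k = 0)
    (h₁ : f 1 + f 0 + g 0 = 0)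
    (hrec : ∀ m, m + 2 ≤ n → f (m + 2) + f (m + 1) + f m + g (m + 1) + g m = 0) :
    ∀ i ≤ n, f i = negOneSeq (f 0) g i := by
  intro i
  induction i using Nat.strong_induction_on with
  | _ i ih =>
    match i with
    | 0 => simp
    | 1 => intro _; linarith [negOneSeq_one_add_zero (f 0) g, negOneSeq_zero (f 0) g]
    | m + 2 =>
      intro hm
      linarith [hrec m hm, negOneSeq_recurrence (f 0) g hg m, ih m (by omega) (by omega),
        ih (m + 1) (by omega) (by omega)]

end negOneSeq

namespace diamondGraph

variable {d : ℕ} {W : Finset ℕ}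

@[simp] lemma adj_inl_inl {i k : Fin (d + 1)} :
    (diamondGraph d W).Adj (.inl i) (.inl k) ↔ (i : ℕ) + 1 = k ∨ (k : ℕ) + 1 = i := by
  simp only [diamondGraph, fromRel_adj, ne_eq, Sum.inl.injEq]
  omega

@[simp] lemma adj_inl_inr {i : Fin (d + 1)} {j : W} :
    (diamondGraph d W).Adj (.inl i) (.inr j) ↔ (i : ℕ) = j ∨ (i : ℕ) = j + 1 := by
  simp [diamondGraph]

@[simp] lemma adj_inr_inl {i : Fin (d + 1)} {j : W} :
    (diamondGraph d W).Adj (.inr j) (.inl i) ↔ (i : ℕ) = j ∨ (i : ℕ) = j + 1 := by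
  simp [diamondGraph]

@[simp] lemma not_adj_inr_inr {j j' : W} : ¬ (diamondGraph d W).Adj (.inr j) (.inr j') := by
  simp [diamondGraph]

def pathSeq (x : Fin (d + 1) ⊕ W → ℝ) (m : ℕ) : ℝ :=
  if h : m < d + 1 then x (.inl ⟨m, h⟩) else 0

def pendSeq (x : Fin (d + 1) ⊕ W → ℝ) (m : ℕ) : ℝ :=
  if h : m ∈ W then x (.inr ⟨m, h⟩) else 0

lemma pathSeq_val (x : Fin (d + 1) ⊕ W → ℝ) (i : Fin (d + 1)) : pathSeq x i = x (.inl i) := by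
  simp [pathSeq, i.isLt]

lemma pathSeq_zero (x : Fin (d + 1) ⊕ W → ℝ) : pathSeq x 0 = x (.inl 0) := by
  simp [pathSeq]

open scoped Classical

lemma adjMatrix_mulVec_inl_zero (x : Fin (d + 1) ⊕ W → ℝ) :
    ((diamondGraph d W).adjMatrix ℝ *ᵥ x) (.inl 0) = pathSeq x 1 + pendSeq x 0 := by
  rw [adjMatrix_mulVec_apply_sum, pathSeq, pendSeq, ← Fin.sum_ite_val_eq (fun k => x (.inl k)),
    ← Finset.sum_subtype_ite_val_eq W (fun j => x (.inr j))]
  congr 1 <;> refine Finset.sum_congr rfl fun k _ => ?_ <;> simp [eq_comm]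

lemma adjMatrix_mulVec_inl_succ (x : Fin (d + 1) ⊕ W → ℝ) (m : ℕ) (hm : m + 1 < d + 1) :
    ((diamondGraph d W).adjMatrix ℝ *ᵥ x) (.inl ⟨m + 1, hm⟩) =
      pathSeq x (m + 2) + pathSeq x m + pendSeq x (m + 1) + pendSeq x m := by
  rw [adjMatrix_mulVec_apply_sum, pathSeq, pathSeq, pendSeq, pendSeq,
    ← Fin.sum_ite_val_eq (fun k => x (.inl k)), ← Fin.sum_ite_val_eq (fun k => x (.inl k)),
    ← Finset.sum_subtype_ite_val_eq W (fun j => x (.inr j)),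
    ← Finset.sum_subtype_ite_val_eq W (fun j => x (.inr j)),
    add_assoc _ (∑ _ : W, _), ← Finset.sum_add_distrib, ← Finset.sum_add_distrib]
  congr 1 <;> refine Finset.sum_congr rfl fun k _ => ?_ <;>
    simp only [adj_inl_inl, adj_inl_inr] <;> split_ifs <;> first | omega | simp

lemma adjMatrix_mulVec_inr (x : Fin (d + 1) ⊕ W → ℝ) (j : W) :
    ((diamondGraph d W).adjMatrix ℝ *ᵥ x) (.inr j) = pathSeq x j + pathSeq x (j + 1) := by
  rw [adjMatrix_mulVec_apply_sum, pathSeq, pathSeq, ← Fin.sum_ite_val_eq (fun k => x (.inl k)),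
    ← Fin.sum_ite_val_eq (fun k => x (.inl k)), ← Finset.sum_add_distrib]
  simp only [adj_inr_inl, not_adj_inr_inr, if_false, Finset.sum_const_zero, add_zero]
  refine Finset.sum_congr rfl fun k _ => ?_
  split_ifs <;> first | omega | simp

lemma mem_eigenspace_neg_one_iff (x : Fin (d + 1) ⊕ W → ℝ) :
    x ∈ Module.End.eigenspace (toLin' ((diamondGraph d W).adjMatrix ℝ)) (-1) ↔
      (diamondGraph d W).adjMatrix ℝ *ᵥ x = -x := by
  rw [Module.End.mem_eigenspace_iff, toLin'_apply, neg_one_smul]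

def negOneVec (d : ℕ) (W : Finset ℕ) (a : ℝ) (g : ℕ → ℝ) : Fin (d + 1) ⊕ W → ℝ :=
  Sum.elim (fun i => negOneSeq a g i) (fun j => g j)

lemma pathSeq_negOneVec (a : ℝ) (g : ℕ → ℝ) (m : ℕ) (hm : m < d + 1) :
    pathSeq (negOneVec d W a g) m = negOneSeq a g m := by
  simp [pathSeq, hm, negOneVec]

lemma pendSeq_negOneVec (a : ℝ) {g : ℕ → ℝ} (hg : ∀ k ∉ W, g k = 0) :
    pendSeq (negOneVec d W a g) = g := by
  ext m
  by_cases hm : m ∈ W <;> simp [pendSeq, hm, negOneVec, hg]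

section

variable (hW : ∀ j ∈ W, j % 3 = 0 ∧ j + 1 < d)
include hW

lemma adjMatrix_mulVec_negOneVec (hmod : d % 3 = 1) (a : ℝ) {g : ℕ → ℝ}
    (hgW : ∀ k ∉ W, g k = 0) :
    (diamondGraph d W).adjMatrix ℝ *ᵥ negOneVec d W a g = -negOneVec d W a g := by
  have hg : ∀ k, k % 3 ≠ 0 → g k = 0 := fun k hk => hgW k fun hkW => hk (hW k hkW).1
  ext (⟨_ | m, hm⟩ | j)
  · rw [Fin.zero_eta, adjMatrix_mulVec_inl_zero, pendSeq_negOneVec a hgW,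
      pathSeq_negOneVec a g 1 (by omega)]
    simp only [Pi.neg_apply, negOneVec, Sum.elim_inl, Fin.val_zero]
    linarith [negOneSeq_one_add_zero a g, negOneSeq_zero a g]
  · rw [adjMatrix_mulVec_inl_succ, pendSeq_negOneVec a hgW, pathSeq_negOneVec a g m (by omega)]
    rcases (by omega : m + 2 < d + 1 ∨ m + 1 = d) with hlt | hend
    · rw [pathSeq_negOneVec a g _ hlt]
      simp only [Pi.neg_apply, negOneVec, Sum.elim_inl]
      linarith [negOneSeq_recurrence a g hg m]
    · have hout : pathSeq (negOneVec d W a g) (m + 2) = 0 := dif_neg (by omega)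
      have hgm : g m = 0 := hgW m fun h => by have := hW _ h; omega
      have hgm' : g (m + 1) = 0 := hgW (m + 1) fun h => by have := hW _ h; omega
      rw [hout, hgm, hgm']
      simp only [Pi.neg_apply, negOneVec, Sum.elim_inl]
      linarith [negOneSeq_add_succ a g (m := m) (by omega)]
  · obtain ⟨hj3, hjd⟩ := hW j j.2
    rw [adjMatrix_mulVec_inr, pathSeq_negOneVec a g _ (by omega),
      pathSeq_negOneVec a g _ (by omega)]
    simp only [Pi.neg_apply, negOneVec, Sum.elim_inr]
    linarith [negOneSeq_add_succ a g hj3]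

lemma negOneVec_eq_of_mulVec_eq_neg {x : Fin (d + 1) ⊕ W → ℝ}
    (hx : (diamondGraph d W).adjMatrix ℝ *ᵥ x = -x) :
    negOneVec d W (x (.inl 0)) (pendSeq x) = x := by
  have hrec := eq_negOneSeq (pendSeq x) (f := pathSeq x) (n := d)
    (fun k hk => dif_neg fun hkW => hk (hW k hkW).1) ?_ ?_
  · ext (i | j)
    · rw [← pathSeq_zero x, ← pathSeq_val x, hrec i (by omega)]
      rfl
    · simp [negOneVec, pendSeq]
  · have := congrFun hx (.inl 0)
    rw [adjMatrix_mulVec_inl_zero, Pi.neg_apply, ← pathSeq_zero x] at this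
    linarith
  · intro m hm
    have := congrFun hx (.inl ⟨m + 1, by omega⟩)
    rw [adjMatrix_mulVec_inl_succ, Pi.neg_apply, ← pathSeq_val x] at this
    linarith

lemma finrank_eigenspace_neg_one (hmod : d % 3 = 1) :
    finrank ℝ (Module.End.eigenspace (toLin' ((diamondGraph d W).adjMatrix ℝ)) (-1)) =
      W.card + 1 := by
  set E := Module.End.eigenspace (toLin' ((diamondGraph d W).adjMatrix ℝ)) (-1)
  let Φ : (Fin (d + 1) ⊕ W → ℝ) →ₗ[ℝ] ℝ × (W → ℝ) :=
    (LinearMap.proj (.inl 0)).prod (LinearMap.funLeft ℝ ℝ Sum.inr)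
  have hΦ : Function.Bijective (Φ ∘ₗ E.subtype) := by
    refine ⟨fun ⟨x, hx⟩ ⟨y, hy⟩ hxy => ?_, fun ⟨a, b⟩ => ?_⟩
    · have h0 : x (.inl 0) = y (.inl 0) := congrArg Prod.fst hxy
      have hinr : ∀ j, x (.inr j) = y (.inr j) := congrFun (congrArg Prod.snd hxy)
      have hpend : pendSeq x = pendSeq y := by
        ext m
        simp only [pendSeq, hinr]
      rw [Subtype.mk.injEq,
        ← negOneVec_eq_of_mulVec_eq_neg hW ((mem_eigenspace_neg_one_iff x).1 hx),
        ← negOneVec_eq_of_mulVec_eq_neg hW ((mem_eigenspace_neg_one_iff y).1 hy), h0, hpend]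
    · let g : ℕ → ℝ := fun m => if h : m ∈ W then b ⟨m, h⟩ else 0
      have hgW : ∀ k ∉ W, g k = 0 := fun k hk => dif_neg hk
      refine ⟨⟨negOneVec d W a g, (mem_eigenspace_neg_one_iff _).2
        (adjMatrix_mulVec_negOneVec hW hmod a hgW)⟩, ?_⟩
      ext j <;> simp [Φ, negOneVec, g]
  rw [(LinearEquiv.ofBijective _ hΦ).finrank_eq]
  simp [add_comm]

end

def coord : Fin (d + 1) ⊕ W → ℕ := Sum.elim (↑) (↑)

lemma coord_le_of_adj {u v : Fin (d + 1) ⊕ W} (h : (diamondGraph d W).Adj u v) :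
    coord v ≤ coord u + 1 := by
  rcases u with i | j <;> rcases v with k | j' <;> simp_all [coord] <;> omega

lemma edist_inl_inl_add_le (a n : ℕ) (h : a + n < d + 1) :
    (diamondGraph d W).edist (.inl ⟨a, by omega⟩) (.inl ⟨a + n, h⟩) ≤ n := by
  induction n with
  | zero => simp
  | succ n ih =>
    calc _ ≤ (diamondGraph d W).edist (.inl ⟨a, by omega⟩) (.inl ⟨a + n, by omega⟩) +
          (diamondGraph d W).edist (.inl ⟨a + n, by omega⟩) (.inl ⟨a + (n + 1), h⟩) :=
          SimpleGraph.edist_triangle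
      _ ≤ n + 1 :=
          add_le_add (ih (by omega)) (edist_le_one_iff_adj_or_eq.2 (.inl (by simp; omega)))

lemma edist_inl_inl_le (a b : Fin (d + 1)) :
    (diamondGraph d W).edist (.inl a) (.inl b) ≤ Nat.dist a b := by
  wlog h : (a : ℕ) ≤ b generalizing a b
  · rw [edist_comm, Nat.dist_comm]
    exact this b a (by omega)
  obtain ⟨n, hn⟩ := Nat.exists_eq_add_of_le h
  have := edist_inl_inl_add_le (W := W) a n (hn ▸ b.isLt)
  simp_rw [← hn] at this
  exact this.trans (by norm_cast; unfold Nat.dist; omega)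

lemma edist_inl_inr_le (a : Fin (d + 1)) (j : W) (hj : (j : ℕ) < d + 1) :
    (diamondGraph d W).edist (.inl a) (.inr j) ≤ Nat.dist a j + 1 :=
  calc _ ≤ (diamondGraph d W).edist (.inl a) (.inl ⟨j, hj⟩) +
        (diamondGraph d W).edist (.inl ⟨j, hj⟩) (.inr j) := SimpleGraph.edist_triangle
    _ ≤ Nat.dist a j + 1 :=
        add_le_add (edist_inl_inl_le a _) (edist_le_one_iff_adj_or_eq.2 (.inl (by simp)))

lemma edist_le (hW : ∀ j ∈ W, 1 ≤ j ∧ j < d) (u v : Fin (d + 1) ⊕ W) :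
    (diamondGraph d W).edist u v ≤ d := by
  rcases u with a | j <;> rcases v with b | j'
  · exact (edist_inl_inl_le a b).trans (by norm_cast; unfold Nat.dist; omega)
  · have := hW j' j'.2
    exact (edist_inl_inr_le a j' (by omega)).trans (by norm_cast; unfold Nat.dist; omega)
  · have := hW j j.2
    rw [edist_comm]
    exact (edist_inl_inr_le b j (by omega)).trans (by norm_cast; unfold Nat.dist; omega)
  · have := hW j j.2
    have := hW j' j'.2
    calc _ ≤ (diamondGraph d W).edist (.inr j) (.inl ⟨j, by omega⟩) +
          (diamondGraph d W).edist (.inl ⟨j, by omega⟩) (.inr j') := SimpleGraph.edist_triangle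
      _ ≤ 1 + (Nat.dist j j' + 1) :=
          add_le_add (edist_le_one_iff_adj_or_eq.2 (.inl (by simp)))
            (edist_inl_inr_le _ _ (by omega))
      _ ≤ d := by norm_cast; unfold Nat.dist; omega

lemma ediam_eq (hW : ∀ j ∈ W, 1 ≤ j ∧ j < d) : (diamondGraph d W).ediam = d := by
  refine le_antisymm (ediam_le_of_edist_le (edist_le hW)) ?_
  have := le_add_edist_of_adj (G := diamondGraph d W) (fun _ _ => coord_le_of_adj)
    (.inl 0) (.inl (Fin.last d))
  simp only [coord, Sum.elim_inl, Fin.val_zero, Fin.val_last, Nat.cast_zero, zero_add] at this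
  exact this.trans edist_le_ediam

end diamondGraph

theorem diamond_eigMult_neg_one_general (d : ℕ) (hmod : d % 3 = 1) (W : Finset ℕ)
    (hW : ∀ j ∈ W, j % 3 = 0 ∧ 3 ≤ j ∧ j ≤ d - 4) :
    Fintype.card (Fin (d + 1) ⊕ {j // j ∈ W}) = d + 1 + W.card ∧
    (diamondGraph d W).diam = d ∧
    eigMult (diamondGraph d W) (-1) = W.card + 1 := by
  refine ⟨by simp, ?_, ?_⟩
  · rw [SimpleGraph.diam, diamondGraph.ediam_eq fun j hj => ?_, ENat.toNat_natCast]
    have := hW j hj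
    omega
  · refine diamondGraph.finrank_eigenspace_neg_one (fun j hj => ?_) hmod
    have := hW j hj
    omega

theorem diamond_eigMult_neg_one (d : ℕ) (hd : 7 ≤ d) (hmod : d % 3 = 1) (W : Finset ℕ)
    (hW : ∀ j ∈ W, j % 3 = 0 ∧ 3 ≤ j ∧ j ≤ d - 4) :
    Fintype.card (Fin (d + 1) ⊕ {j // j ∈ W}) = d + 1 + W.card ∧
    (diamondGraph d W).diam = d ∧
    eigMult (diamondGraph d W) (-1) = W.card + 1 :=
  diamond_eigMult_neg_one_general d hmod W hW
end

section
/- Deleting from G = P_{d+1} ⋄ W the set S = {v_j : j ≡ 2 (mod 3), 1 ≤ j ≤ d} yields a disjoint union of a = |W| triangles C_3 and b = |S| + 1 − |W| edges K_2; consequently m_{G−S}(−1) = 2a + b. -/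
open SimpleGraph Matrix Module

-- Disjoint union of `a` triangles and `b` edges.
def unionC3K2 (a b : ℕ) : SimpleGraph ((Fin a × Fin 3) ⊕ (Fin b × Fin 2)) :=
  SimpleGraph.fromRel (fun x y =>
    match x, y with
    | Sum.inl (i, _), Sum.inl (j, _) => i = j
    | Sum.inr (i, _), Sum.inr (j, _) => i = j
    | _, _ => False)

open scoped Classical in
lemma eigMult_congr {V W : Type*} [Fintype V] [Fintype W] {G : SimpleGraph V} {H : SimpleGraph W}
    (e : G ≃g H) (μ : ℝ) : eigMult G μ = eigMult H μ := by
  classical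
  let P : (V → ℝ) ≃ₗ[ℝ] (W → ℝ) := LinearEquiv.funCongrLeft ℝ ℝ e.toEquiv.symm
  have hPsymm : ∀ (y : W → ℝ), P.symm y = fun v => y (e v) := by
    intro y; rfl
  have key : ∀ (y : W → ℝ),
      (G.adjMatrix ℝ) *ᵥ (fun v => y (e v)) = fun v => ((H.adjMatrix ℝ) *ᵥ y) (e v) := by
    intro y
    funext v
    rw [mulVec, mulVec]
    simp only [dotProduct]
    refine Fintype.sum_equiv e.toEquiv _ _ ?_
    intro u
    congr 1
    simp only [adjMatrix_apply, RelIso.coe_fn_toEquiv]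
    by_cases h : G.Adj v u
    · rw [if_pos h, if_pos (e.map_adj_iff.mpr h)]
    · rw [if_neg h, if_neg (fun hc => h (e.map_adj_iff.mp hc))]
  have hmap : Submodule.map (P : (V → ℝ) →ₗ[ℝ] (W → ℝ))
      (Module.End.eigenspace (Matrix.toLin' (G.adjMatrix ℝ)) μ)
      = Module.End.eigenspace (Matrix.toLin' (H.adjMatrix ℝ)) μ := by
    ext y
    rw [Submodule.mem_map_equiv, Module.End.mem_eigenspace_iff, Module.End.mem_eigenspace_iff,
      toLin'_apply, toLin'_apply, hPsymm, key]
    constructor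
    · intro h
      funext w
      have := congrFun h (e.symm w)
      simpa using this
    · intro h
      funext v
      have := congrFun h (e v)
      simpa using this
  rw [eigMult, eigMult, ← hmap, LinearEquiv.finrank_map_eq]

-- block-sum linear map
noncomputable def blockSum (a b : ℕ) :
    (((Fin a × Fin 3) ⊕ (Fin b × Fin 2)) → ℝ) →ₗ[ℝ] ((Fin a ⊕ Fin b) → ℝ) where
  toFun x := fun bl =>
    match bl with
    | Sum.inl i => ∑ t : Fin 3, x (Sum.inl (i, t))
    | Sum.inr i => ∑ t : Fin 2, x (Sum.inr (i, t))
  map_add' x y := by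
    funext bl
    cases bl <;> simp [Finset.sum_add_distrib]
  map_smul' c x := by
    funext bl
    cases bl <;> simp [Finset.mul_sum] <;> ring

lemma unionC3K2_adj_inl (a b : ℕ) (i j : Fin a) (s t : Fin 3) :
    (unionC3K2 a b).Adj (Sum.inl (i, s)) (Sum.inl (j, t)) ↔ i = j ∧ s ≠ t := by
  simp only [unionC3K2, fromRel_adj]
  constructor
  · rintro ⟨hne, h | h⟩
    · exact ⟨h, fun hc => hne (by simp [h, hc])⟩
    · exact ⟨h.symm, fun hc => hne (by simp [h.symm, hc])⟩
  · rintro ⟨h1, h2⟩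
    exact ⟨by simp [h1, h2, Prod.ext_iff], Or.inl h1⟩

lemma unionC3K2_adj_inr (a b : ℕ) (i j : Fin b) (s t : Fin 2) :
    (unionC3K2 a b).Adj (Sum.inr (i, s)) (Sum.inr (j, t)) ↔ i = j ∧ s ≠ t := by
  simp only [unionC3K2, fromRel_adj]
  constructor
  · rintro ⟨hne, h | h⟩
    · exact ⟨h, fun hc => hne (by simp [h, hc])⟩
    · exact ⟨h.symm, fun hc => hne (by simp [h.symm, hc])⟩
  · rintro ⟨h1, h2⟩
    exact ⟨by simp [h1, h2, Prod.ext_iff], Or.inl h1⟩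

lemma unionC3K2_adj_mixed (a b : ℕ) (p : Fin a × Fin 3) (q : Fin b × Fin 2) :
    ¬ (unionC3K2 a b).Adj (Sum.inl p) (Sum.inr q) := by
  obtain ⟨i, s⟩ := p; obtain ⟨j, t⟩ := q
  simp [unionC3K2, fromRel_adj]

open scoped Classical in
lemma nf_inl (a b : ℕ) (i : Fin a) (s : Fin 3) :
    (unionC3K2 a b).neighborFinset (Sum.inl (i, s)) =
      Finset.image (fun t => Sum.inl (i, t)) ({s}ᶜ : Finset (Fin 3)) := by
  ext u
  rw [mem_neighborFinset]
  cases u with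
  | inl p =>
    obtain ⟨j, t⟩ := p
    rw [unionC3K2_adj_inl]
    simp only [Finset.mem_image, Finset.mem_compl, Finset.mem_singleton]
    constructor
    · rintro ⟨rfl, hst⟩; exact ⟨t, fun hc => hst (hc ▸ rfl), rfl⟩
    · rintro ⟨t', ht', heq⟩
      obtain ⟨h1, h2⟩ : i = j ∧ t' = t := by
        simpa [Prod.ext_iff] using heq
      exact ⟨h1, fun hc => ht' (by rw [h2]; exact hc.symm)⟩
  | inr q =>
    simp only [Finset.mem_image, Finset.mem_compl, Finset.mem_singleton]
    constructor
    · intro h; exact absurd h (unionC3K2_adj_mixed a b _ _)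
    · rintro ⟨t', _, heq⟩; exact absurd heq (by simp)

open scoped Classical in
lemma nf_inr (a b : ℕ) (i : Fin b) (s : Fin 2) :
    (unionC3K2 a b).neighborFinset (Sum.inr (i, s)) =
      Finset.image (fun t => Sum.inr (i, t)) ({s}ᶜ : Finset (Fin 2)) := by
  ext u
  rw [mem_neighborFinset]
  cases u with
  | inr p =>
    obtain ⟨j, t⟩ := p
    rw [unionC3K2_adj_inr]
    simp only [Finset.mem_image, Finset.mem_compl, Finset.mem_singleton]
    constructor
    · rintro ⟨rfl, hst⟩; exact ⟨t, fun hc => hst (hc ▸ rfl), rfl⟩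
    · rintro ⟨t', ht', heq⟩
      obtain ⟨h1, h2⟩ : i = j ∧ t' = t := by
        simpa [Prod.ext_iff] using heq
      exact ⟨h1, fun hc => ht' (by rw [h2]; exact hc.symm)⟩
  | inl q =>
    simp only [Finset.mem_image, Finset.mem_compl, Finset.mem_singleton]
    constructor
    · intro h; exact absurd h.symm (unionC3K2_adj_mixed a b _ _)
    · rintro ⟨t', _, heq⟩; exact absurd heq (by simp)

open scoped Classical in
lemma mulVec_union (a b : ℕ) (x : ((Fin a × Fin 3) ⊕ (Fin b × Fin 2)) → ℝ)
    (v : (Fin a × Fin 3) ⊕ (Fin b × Fin 2)) :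
    ((unionC3K2 a b).adjMatrix ℝ *ᵥ x) v =
      (blockSum a b x) (Sum.elim (fun p => Sum.inl p.1) (fun p => Sum.inr p.1) v) - x v := by
  rw [adjMatrix_mulVec_apply]
  cases v with
  | inl p =>
    obtain ⟨i, s⟩ := p
    rw [nf_inl, Finset.sum_image (by intro u _ u' _ h; simpa [Prod.ext_iff] using h)]
    have h := Finset.sum_compl_add_sum ({s} : Finset (Fin 3)) (fun t => x (Sum.inl (i, t)))
    simp only [Finset.sum_singleton] at h
    simp only [Sum.elim_inl, blockSum]
    dsimp
    linarith
  | inr p =>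
    obtain ⟨i, s⟩ := p
    rw [nf_inr, Finset.sum_image (by intro u _ u' _ h; simpa [Prod.ext_iff] using h)]
    have h := Finset.sum_compl_add_sum ({s} : Finset (Fin 2)) (fun t => x (Sum.inr (i, t)))
    simp only [Finset.sum_singleton] at h
    simp only [Sum.elim_inr, blockSum]
    dsimp
    linarith

open scoped Classical in
lemma blockSum_surj (a b : ℕ) : Function.Surjective (blockSum a b) := by
  intro g
  refine ⟨fun u => match u with
    | Sum.inl (i, t) => if t = 0 then g (Sum.inl i) else 0
    | Sum.inr (i, t) => if t = 0 then g (Sum.inr i) else 0, ?_⟩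
  funext bl
  cases bl with
  | inl i => simp [blockSum, Fin.sum_univ_three]
  | inr i => simp [blockSum, Fin.sum_univ_two]

open scoped Classical in
lemma eigMult_unionC3K2 (a b : ℕ) : eigMult (unionC3K2 a b) (-1) = 2 * a + b := by
  classical
  have hker : Module.End.eigenspace (Matrix.toLin' ((unionC3K2 a b).adjMatrix ℝ)) (-1)
      = LinearMap.ker (blockSum a b) := by
    ext x
    rw [Module.End.mem_eigenspace_iff, toLin'_apply, LinearMap.mem_ker]
    constructor
    · intro h
      funext bl
      have hv : ∀ v, (blockSum a b x) (Sum.elim (fun (p : Fin a × Fin 3) => (Sum.inl p.1 : Fin a ⊕ Fin b)) (fun (p : Fin b × Fin 2) => Sum.inr p.1) v) = 0 := by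
        intro v
        have h1 := congrFun h v
        rw [mulVec_union] at h1
        simp only [Pi.smul_apply, smul_eq_mul] at h1
        linarith
      cases bl with
      | inl i => simpa using hv (Sum.inl (i, 0))
      | inr i => simpa using hv (Sum.inr (i, 0))
    · intro h
      funext v
      rw [mulVec_union, h]
      simp
  have hk : finrank ℝ (LinearMap.ker (blockSum a b)) = 2 * a + b := by
    have hrn := LinearMap.finrank_range_add_finrank_ker (blockSum a b)
    have hrange : LinearMap.range (blockSum a b) = ⊤ :=
      LinearMap.range_eq_top.mpr (blockSum_surj a b)
    rw [hrange, finrank_top, finrank_fintype_fun_eq_card, finrank_fintype_fun_eq_card] at hrn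
    simp only [Fintype.card_sum, Fintype.card_prod, Fintype.card_fin] at hrn
    omega
  have h2 := congrArg (fun p : Submodule ℝ ((Fin a × Fin 3 ⊕ Fin b × Fin 2) → ℝ) => finrank ℝ p) hker
  rw [eigMult]
  exact h2.trans hk

section Iso

variable (d : ℕ) (W : Finset ℕ)

def Sset : Set (Fin (d + 1) ⊕ {j // j ∈ W}) :=
  {x | ∃ i : Fin (d + 1), x = Sum.inl i ∧ (i : ℕ) % 3 = 2}

lemma mem_compl_inl {i : Fin (d + 1)}
    (h : (Sum.inl i : Fin (d + 1) ⊕ {j // j ∈ W}) ∈ (Sset d W)ᶜ) : (i : ℕ) % 3 ≠ 2 :=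
  fun hc => h ⟨i, rfl, hc⟩

lemma inr_mem_compl (j : {j // j ∈ W}) :
    (Sum.inr j : Fin (d + 1) ⊕ {j // j ∈ W}) ∈ (Sset d W)ᶜ := by
  rintro ⟨i, h, -⟩
  exact absurd h (by simp)

variable (hW : ∀ j ∈ W, j % 3 = 0 ∧ 3 ≤ j ∧ j ≤ d - 4)

def Tset : Finset (Fin ((d - 1) / 3 + 1)) :=
  W.attach.image (fun j => ⟨j.1 / 3, by obtain ⟨h1, h2, h3⟩ := hW j.1 j.2; omega⟩)

lemma mem_Tset {k : Fin ((d - 1) / 3 + 1)} :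
    k ∈ Tset d W hW ↔ 3 * (k : ℕ) ∈ W := by
  simp only [Tset, Finset.mem_image, Finset.mem_attach, true_and, Subtype.exists]
  constructor
  · rintro ⟨j, hj, hjk⟩
    obtain ⟨h1, h2, h3⟩ := hW j hj
    have : (⟨j / 3, by omega⟩ : Fin ((d - 1) / 3 + 1)).1 = (k : ℕ) := by rw [hjk]
    simp only [] at this
    have : j = 3 * (k : ℕ) := by omega
    rwa [← this]
  · intro h
    refine ⟨3 * (k : ℕ), h, ?_⟩
    apply Fin.ext
    simp only []
    omega

lemma card_Tset : (Tset d W hW).card = W.card := by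
  rw [Tset, Finset.card_image_of_injective, Finset.card_attach]
  intro j j' hjj'
  obtain ⟨h1, h2, h3⟩ := hW j.1 j.2
  obtain ⟨h1', h2', h3'⟩ := hW j'.1 j'.2
  have : j.1 / 3 = j'.1 / 3 := by
    have := congrArg Fin.val hjj'
    simpa using this
  exact Subtype.ext (by omega)

noncomputable def eT : ↥(Tset d W hW) ≃ Fin W.card :=
  Finset.equivFinOfCardEq (card_Tset d W hW)

noncomputable def eC : ↥((Tset d W hW)ᶜ) ≃ Fin ((d - 1) / 3 + 1 - W.card) :=
  Finset.equivFinOfCardEq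
    (by rw [Finset.card_compl, card_Tset, Fintype.card_fin])

end Iso

section Maps

variable (d : ℕ) (W : Finset ℕ) (hd : 7 ≤ d) (hmod : d % 3 = 1)
  (hW : ∀ j ∈ W, j % 3 = 0 ∧ 3 ≤ j ∧ j ≤ d - 4)

noncomputable def fwd :
    ∀ x : Fin (d + 1) ⊕ {j // j ∈ W}, x ∈ (Sset d W)ᶜ →
      (Fin W.card × Fin 3) ⊕ (Fin ((d - 1) / 3 + 1 - W.card) × Fin 2)
  | Sum.inl i, h =>
      if hk : (⟨(i : ℕ) / 3, by
          have := mem_compl_inl d W h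
          have := i.isLt
          omega⟩ : Fin ((d - 1) / 3 + 1)) ∈ Tset d W hW then
        Sum.inl (eT d W hW ⟨_, hk⟩, ⟨(i : ℕ) % 3, by omega⟩)
      else
        Sum.inr (eC d W hW ⟨_, Finset.mem_compl.mpr hk⟩,
          ⟨(i : ℕ) % 3, by have := mem_compl_inl d W h; omega⟩)
  | Sum.inr j, _ =>
      Sum.inl (eT d W hW ⟨⟨j.1 / 3, by
          obtain ⟨h1, h2, h3⟩ := hW j.1 j.2; omega⟩, by
          rw [mem_Tset]
          have : 3 * (j.1 / 3) = j.1 := by obtain ⟨h1, h2, h3⟩ := hW j.1 j.2; omega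
          rw [this]; exact j.2⟩, ⟨2, by omega⟩)

noncomputable def bwd :
    (Fin W.card × Fin 3) ⊕ (Fin ((d - 1) / 3 + 1 - W.card) × Fin 2) →
      ↥((Sset d W)ᶜ)
  | Sum.inl (t, p) =>
      if hp : (p : ℕ) < 2 then
        ⟨Sum.inl ⟨3 * (((eT d W hW).symm t : ↥(Tset d W hW)) : Fin ((d - 1) / 3 + 1)) + (p : ℕ), by
            have := (((eT d W hW).symm t : ↥(Tset d W hW)) : Fin ((d - 1) / 3 + 1)).isLt
            omega⟩, by
          rintro ⟨i', hi', hc⟩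
          rw [Sum.inl.injEq] at hi'
          subst hi'
          simp only [] at hc
          omega⟩
      else
        ⟨Sum.inr ⟨3 * (((eT d W hW).symm t : ↥(Tset d W hW)) : Fin ((d - 1) / 3 + 1)),
            (mem_Tset d W hW).mp ((eT d W hW).symm t).2⟩,
          inr_mem_compl d W _⟩
  | Sum.inr (t, p) =>
      ⟨Sum.inl ⟨3 * ((((eC d W hW).symm t : ↥((Tset d W hW)ᶜ)) : Fin ((d - 1) / 3 + 1)) : ℕ) + (p : ℕ), by
          have := ((((eC d W hW).symm t : ↥((Tset d W hW)ᶜ)) : Fin ((d - 1) / 3 + 1))).isLt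
          have := p.isLt
          omega⟩, by
        rintro ⟨i', hi', hc⟩
        rw [Sum.inl.injEq] at hi'
        subst hi'
        simp only [] at hc
        have := p.isLt
        omega⟩

end Maps

section Inv

variable (d : ℕ) (W : Finset ℕ) (hd : 7 ≤ d) (hmod : d % 3 = 1)
  (hW : ∀ j ∈ W, j % 3 = 0 ∧ 3 ≤ j ∧ j ≤ d - 4)

lemma bwd_fwd : ∀ (x : Fin (d + 1) ⊕ {j // j ∈ W}) (hx : x ∈ (Sset d W)ᶜ),
    bwd d W hd hmod hW (fwd d W hd hmod hW x hx) = ⟨x, hx⟩ := by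
  rintro (i | j) hx
  · have hne := mem_compl_inl d W hx
    simp only [fwd]
    split
    case isTrue hk =>
      simp only [bwd, Equiv.symm_apply_apply]
      split
      case isTrue hp =>
        apply Subtype.ext
        simp only [Sum.inl.injEq]
        apply Fin.ext
        show 3 * ((i : ℕ) / 3) + (i : ℕ) % 3 = (i : ℕ)
        omega
      case isFalse hp =>
        exact absurd (show (i : ℕ) % 3 < 2 by omega) hp
    case isFalse hk =>
      simp only [bwd, Equiv.symm_apply_apply]
      apply Subtype.ext
      simp only [Sum.inl.injEq]
      apply Fin.ext
      show 3 * ((i : ℕ) / 3) + (i : ℕ) % 3 = (i : ℕ)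
      omega
  · obtain ⟨hw1, hw2, hw3⟩ := hW j.1 j.2
    simp only [fwd, bwd, Equiv.symm_apply_apply]
    split
    case isTrue hp =>
      exact absurd hp (show ¬ ((2 : ℕ) < 2) by omega)
    case isFalse hp =>
      apply Subtype.ext
      simp only [Sum.inr.injEq]
      apply Subtype.ext
      simp
      omega

end Inv

section Inv2

variable (d : ℕ) (W : Finset ℕ) (hd : 7 ≤ d) (hmod : d % 3 = 1)
  (hW : ∀ j ∈ W, j % 3 = 0 ∧ 3 ≤ j ∧ j ≤ d - 4)

lemma fwd_bwd : ∀ y : (Fin W.card × Fin 3) ⊕ (Fin ((d - 1) / 3 + 1 - W.card) × Fin 2),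
    fwd d W hd hmod hW (bwd d W hd hmod hW y).1 (bwd d W hd hmod hW y).2 = y := by
  rintro (⟨t, p⟩ | ⟨t, p⟩)
  · simp only [bwd]
    split
    case isTrue hp =>
      simp only [fwd]
      have hmem : (⟨(3 * ↑↑((eT d W hW).symm t) + ↑p) / 3, by
          have := (((eT d W hW).symm t : ↥(Tset d W hW)) : Fin ((d - 1) / 3 + 1)).isLt
          omega⟩ : Fin ((d - 1) / 3 + 1)) ∈ Tset d W hW := by
        rw [mem_Tset]
        simp only [Fin.val_mk]
        have h1 : (3 * ↑↑((eT d W hW).symm t) + (p : ℕ)) / 3 = ↑↑((eT d W hW).symm t) := by omega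
        rw [h1]
        exact (mem_Tset d W hW).mp ((eT d W hW).symm t).2
      rw [dif_pos hmem]
      · rw [Sum.inl.injEq, Prod.mk.injEq]
        constructor
        · rw [Equiv.apply_eq_iff_eq_symm_apply]
          apply Subtype.ext
          apply Fin.ext
          simp only [Fin.val_mk]
          omega
        · apply Fin.ext
          simp only [Fin.val_mk]
          omega
    case isFalse hp =>
      simp only [fwd]
      rw [Sum.inl.injEq, Prod.mk.injEq]
      constructor
      · rw [Equiv.apply_eq_iff_eq_symm_apply]
        apply Subtype.ext
        apply Fin.ext
        simp only [Fin.val_mk]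
        omega
      · apply Fin.ext
        simp only [Fin.val_mk]
        omega
  · simp only [bwd, fwd]
    split
    case isTrue hk =>
      exfalso
      rw [mem_Tset] at hk
      simp only [Fin.val_mk] at hk
      have hplt := p.isLt
      have h1 : (3 * ↑↑((eC d W hW).symm t) + (p : ℕ)) / 3 = ↑↑((eC d W hW).symm t) := by omega
      rw [h1] at hk
      exact absurd ((mem_Tset d W hW).mpr hk) (Finset.mem_compl.mp ((eC d W hW).symm t).2)
    case isFalse hk =>
      rw [Sum.inr.injEq, Prod.mk.injEq]
      constructor
      · rw [Equiv.apply_eq_iff_eq_symm_apply]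
        apply Subtype.ext
        apply Fin.ext
        simp only [Fin.val_mk]
        have hplt := p.isLt
        omega
      · apply Fin.ext
        simp only [Fin.val_mk]
        have hplt := p.isLt
        omega

end Inv2

section Blocks

variable (d : ℕ) (W : Finset ℕ)

def dblk : Fin (d + 1) ⊕ {j // j ∈ W} → ℕ :=
  Sum.elim (fun i => (i : ℕ) / 3) (fun j => j.1 / 3)

variable (hW : ∀ j ∈ W, j % 3 = 0 ∧ 3 ≤ j ∧ j ≤ d - 4)

noncomputable def tblk :
    (Fin W.card × Fin 3) ⊕ (Fin ((d - 1) / 3 + 1 - W.card) × Fin 2) → Fin ((d - 1) / 3 + 1)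
  | Sum.inl (t, _) => (((eT d W hW).symm t : ↥(Tset d W hW)) : Fin ((d - 1) / 3 + 1))
  | Sum.inr (t, _) => (((eC d W hW).symm t : ↥((Tset d W hW)ᶜ)) : Fin ((d - 1) / 3 + 1))

end Blocks

section Blocks2

variable (d : ℕ) (W : Finset ℕ) (hd : 7 ≤ d) (hmod : d % 3 = 1)
  (hW : ∀ j ∈ W, j % 3 = 0 ∧ 3 ≤ j ∧ j ≤ d - 4)

lemma tblk_fwd : ∀ (x : Fin (d + 1) ⊕ {j // j ∈ W}) (hx : x ∈ (Sset d W)ᶜ),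
    ((tblk d W hW (fwd d W hd hmod hW x hx)) : ℕ) = dblk d W x := by
  rintro (i | j) hx
  · simp only [fwd]
    split
    case isTrue hk => simp [tblk, Equiv.symm_apply_apply, dblk]
    case isFalse hk => simp [tblk, Equiv.symm_apply_apply, dblk]
  · simp [fwd, tblk, Equiv.symm_apply_apply, dblk]

end Blocks2

lemma unionC3K2_adj_inl' (a b : ℕ) (i j : Fin a) (s t : Fin 3) :
    (unionC3K2 a b).Adj (Sum.inl (i, s)) (Sum.inl (j, t)) ↔ i = j ∧ s ≠ t := by
  simp only [unionC3K2, fromRel_adj]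
  constructor
  · rintro ⟨hne, h | h⟩
    · exact ⟨h, fun hc => hne (by simp [h, hc])⟩
    · exact ⟨h.symm, fun hc => hne (by simp [h.symm, hc])⟩
  · rintro ⟨h1, h2⟩
    exact ⟨by simp [h1, h2, Prod.ext_iff], Or.inl h1⟩

lemma unionC3K2_adj_inr' (a b : ℕ) (i j : Fin b) (s t : Fin 2) :
    (unionC3K2 a b).Adj (Sum.inr (i, s)) (Sum.inr (j, t)) ↔ i = j ∧ s ≠ t := by
  simp only [unionC3K2, fromRel_adj]
  constructor
  · rintro ⟨hne, h | h⟩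
    · exact ⟨h, fun hc => hne (by simp [h, hc])⟩
    · exact ⟨h.symm, fun hc => hne (by simp [h.symm, hc])⟩
  · rintro ⟨h1, h2⟩
    exact ⟨by simp [h1, h2, Prod.ext_iff], Or.inl h1⟩

lemma unionC3K2_adj_mixed' (a b : ℕ) (p : Fin a × Fin 3) (q : Fin b × Fin 2) :
    ¬ (unionC3K2 a b).Adj (Sum.inl p) (Sum.inr q) := by
  obtain ⟨i, s⟩ := p; obtain ⟨j, t⟩ := q
  simp [unionC3K2, fromRel_adj]

section Adj

variable (d : ℕ) (W : Finset ℕ) (hW : ∀ j ∈ W, j % 3 = 0 ∧ 3 ≤ j ∧ j ≤ d - 4)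

lemma target_adj (u v : (Fin W.card × Fin 3) ⊕ (Fin ((d - 1) / 3 + 1 - W.card) × Fin 2)) :
    (unionC3K2 W.card ((d - 1) / 3 + 1 - W.card)).Adj u v ↔
      u ≠ v ∧ tblk d W hW u = tblk d W hW v := by
  rcases u with ⟨i, s⟩ | ⟨i, s⟩ <;> rcases v with ⟨j, t⟩ | ⟨j, t⟩
  · rw [unionC3K2_adj_inl']
    simp only [tblk]
    constructor
    · rintro ⟨rfl, hst⟩
      exact ⟨by simp only [ne_eq, Sum.inl.injEq, Prod.mk.injEq, true_and]; exact hst, rfl⟩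
    · rintro ⟨hne, hb⟩
      have hij : i = j := (eT d W hW).symm.injective (Subtype.coe_injective hb)
      subst hij
      exact ⟨rfl, fun hst => hne (by rw [hst])⟩
  · constructor
    · intro h; exact absurd h (unionC3K2_adj_mixed' _ _ _ _)
    · rintro ⟨-, hb⟩
      simp only [tblk] at hb
      exact absurd (hb ▸ ((eT d W hW).symm i).2)
        (Finset.mem_compl.mp ((eC d W hW).symm j).2)
  · constructor
    · intro h; exact absurd h.symm (unionC3K2_adj_mixed' _ _ _ _)
    · rintro ⟨-, hb⟩
      simp only [tblk] at hb
      exact absurd (hb ▸ ((eT d W hW).symm j).2)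
        (Finset.mem_compl.mp ((eC d W hW).symm i).2)
  · rw [unionC3K2_adj_inr']
    simp only [tblk]
    constructor
    · rintro ⟨rfl, hst⟩
      exact ⟨by simp only [ne_eq, Sum.inr.injEq, Prod.mk.injEq, true_and]; exact hst, rfl⟩
    · rintro ⟨hne, hb⟩
      have hij : i = j := (eC d W hW).symm.injective (Subtype.coe_injective hb)
      subst hij
      exact ⟨rfl, fun hst => hne (by rw [hst])⟩

end Adj

section DomAdj

variable (d : ℕ) (W : Finset ℕ) (hd : 7 ≤ d) (hmod : d % 3 = 1)
  (hW : ∀ j ∈ W, j % 3 = 0 ∧ 3 ≤ j ∧ j ≤ d - 4)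

include hW in
lemma domain_adj : ∀ (x y : Fin (d + 1) ⊕ {j // j ∈ W}),
    x ∈ (Sset d W)ᶜ → y ∈ (Sset d W)ᶜ →
    ((diamondGraph d W).Adj x y ↔ x ≠ y ∧ dblk d W x = dblk d W y) := by
  rintro (i | j) (k | j') hx hy
  · have hi := mem_compl_inl d W hx
    have hk := mem_compl_inl d W hy
    have hi2 := i.isLt
    have hk2 := k.isLt
    simp only [diamondGraph, fromRel_adj, dblk, Sum.elim_inl, ne_eq, Sum.inl.injEq]
    rw [Fin.ext_iff]
    constructor
    · rintro ⟨h1, h2 | h2⟩ <;> exact ⟨fun hc => h1 (by omega), by omega⟩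
    · rintro ⟨h1, h2⟩
      have h1' : (i : ℕ) ≠ (k : ℕ) := fun hc => h1 (by omega)
      exact ⟨fun hc => h1 (by omega), by omega⟩
  · have hi := mem_compl_inl d W hx
    have hi2 := i.isLt
    obtain ⟨h1, h2, h3⟩ := hW j'.1 j'.2
    simp only [diamondGraph, fromRel_adj, dblk, Sum.elim_inl, Sum.elim_inr, ne_eq]
    have hne : (Sum.inl i : Fin (d + 1) ⊕ {j // j ∈ W}) ≠ Sum.inr j' := by simp
    simp only [hne, not_false_iff, true_and, or_false]
    constructor
    · intro h; omega
    · intro h; omega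
  · have hi := mem_compl_inl d W hy
    have hi2 := k.isLt
    obtain ⟨h1, h2, h3⟩ := hW j.1 j.2
    simp only [diamondGraph, fromRel_adj, dblk, Sum.elim_inl, Sum.elim_inr, ne_eq]
    have hne : (Sum.inr j : Fin (d + 1) ⊕ {j // j ∈ W}) ≠ Sum.inl k := by simp
    simp only [hne, not_false_iff, true_and, false_or]
    constructor
    · intro h; omega
    · intro h; omega
  · obtain ⟨h1, h2, h3⟩ := hW j.1 j.2
    obtain ⟨h1', h2', h3'⟩ := hW j'.1 j'.2
    simp only [diamondGraph, fromRel_adj, dblk, Sum.elim_inr, ne_eq, Sum.inr.injEq]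
    constructor
    · rintro ⟨-, h | h⟩ <;> exact absurd h (by simp)
    · rintro ⟨hne, hb⟩
      exfalso
      apply hne
      apply Subtype.ext
      omega

end DomAdj

section Final

variable (d : ℕ) (W : Finset ℕ) (hd : 7 ≤ d) (hmod : d % 3 = 1)
  (hW : ∀ j ∈ W, j % 3 = 0 ∧ 3 ≤ j ∧ j ≤ d - 4)

noncomputable def vE : ↥((Sset d W)ᶜ) ≃
    ((Fin W.card × Fin 3) ⊕ (Fin ((d - 1) / 3 + 1 - W.card) × Fin 2)) where
  toFun := fun x => fwd d W hd hmod hW x.1 x.2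
  invFun := bwd d W hd hmod hW
  left_inv := fun x => bwd_fwd d W hd hmod hW x.1 x.2
  right_inv := fwd_bwd d W hd hmod hW

noncomputable def isoC :
    ((diamondGraph d W).induce ((Sset d W)ᶜ)) ≃g
      unionC3K2 W.card ((d - 1) / 3 + 1 - W.card) where
  toEquiv := vE d W hd hmod hW
  map_rel_iff' := by
    intro x y
    rw [target_adj d W hW]
    rw [comap_adj]
    simp only [Function.Embedding.coe_subtype]
    rw [domain_adj d W hW x.1 y.1 x.2 y.2]
    have h1 : vE d W hd hmod hW x ≠ vE d W hd hmod hW y ↔ x ≠ y :=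
      (vE d W hd hmod hW).injective.ne_iff
    have h2 : tblk d W hW (vE d W hd hmod hW x) = tblk d W hW (vE d W hd hmod hW y) ↔
        dblk d W x.1 = dblk d W y.1 := by
      rw [Fin.ext_iff]
      show ((tblk d W hW (fwd d W hd hmod hW x.1 x.2)) : ℕ) =
        ((tblk d W hW (fwd d W hd hmod hW y.1 y.2)) : ℕ) ↔ _
      rw [tblk_fwd, tblk_fwd]
    rw [h1, h2]
    have h3 : x ≠ y ↔ (x : Fin (d + 1) ⊕ {j // j ∈ W}) ≠ (y : Fin (d + 1) ⊕ {j // j ∈ W}) :=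
      not_congr (by rw [Subtype.ext_iff])
    rw [h3]

end Final

open scoped Classical in
theorem diamond_minus_S (d : ℕ) (hd : 7 ≤ d) (hmod : d % 3 = 1) (W : Finset ℕ)
    (hW : ∀ j ∈ W, j % 3 = 0 ∧ 3 ≤ j ∧ j ≤ d - 4)
    (S : Set (Fin (d + 1) ⊕ {j // j ∈ W}))
    (hS : S = {x | ∃ i : Fin (d + 1), x = Sum.inl i ∧ (i : ℕ) % 3 = 2}) :
    Nonempty (((diamondGraph d W).induce Sᶜ) ≃g
        unionC3K2 W.card ((d - 1) / 3 + 1 - W.card)) ∧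
    eigMult ((diamondGraph d W).induce Sᶜ) (-1) =
      2 * W.card + ((d - 1) / 3 + 1 - W.card) := by
  subst hS
  refine ⟨⟨isoC d W hd hmod hW⟩, ?_⟩
  exact (eigMult_congr (isoC d W hd hmod hW) (-1)).trans (eigMult_unionC3K2 _ _)
end
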